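/- arXiv:1211.0031 — 3 statements merged into one kernel-verified Lean document; each statement's English description precedes it below -/
import Mathlib

section
/- Let X be a set and let S ⊆ Bin(X) be a distributive set all of whose elements are invertible in the monoid Bin(X). Then the subgroup G(S) of the group of units of Bin(X) generated by S is itself a distributive set (a distributive group). -/
universe u

/-- `BinOp X` is the set of all binary operations on `X`. -/
def BinOp (X : Type u) : Type u := X → X → X

namespace BinOp

variable {X : Type u}

/-- `Bin(X)` is a monoid with composition `a (*₁*₂) b = (a *₁ b) *₂ b` and
identity the right-trivial operation `a *₀ b = a`. -/
instance instMonoid : Monoid (BinOp X) where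
  mul f g := fun a b => g (f a b) b
  one := fun a _ => a
  mul_assoc _ _ _ := rfl
  one_mul _ := rfl
  mul_one _ := rfl

/-- The pair `(f, g)` is right distributive: `(a * b) *' c = (a *' c) * (b *' c)`. -/
def RightDistrib (f g : BinOp X) : Prop :=
  ∀ a b c : X, g (f a b) c = f (g a c) (g b c)

/-- A set of binary operations is distributive if every pair of its elements
(possibly equal) is right distributive. -/
def DistribSet (S : Set (BinOp X)) : Prop :=
  ∀ f ∈ S, ∀ g ∈ S, RightDistrib f g

end BinOp

/-!
For a fixed operation `g`, the invertible operations `f` with `(f, g)` right distributive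
form a subgroup of `Bin_inv(X)`, and so do, for a fixed `f`, the invertible `g` with `(f, g)`
right distributive. Two applications of "the closure is the least subgroup containing `S`"
then extend distributivity from `S` to the generated subgroup, one argument at a time.
-/

namespace BinOp

variable {X : Type u}

theorem rightDistrib_one_left (g : BinOp X) : RightDistrib 1 g := fun _ _ _ => rfl

theorem rightDistrib_one_right (f : BinOp X) : RightDistrib f 1 := fun _ _ _ => rfl

theorem RightDistrib.mul_left {f f' g : BinOp X} (h : RightDistrib f g)
    (h' : RightDistrib f' g) : RightDistrib (f * f') g := fun a b c => by
  show g (f' (f a b) b) c = f' (f (g a c) (g b c)) (g b c)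
  rw [h', h]

theorem RightDistrib.mul_right {f g g' : BinOp X} (h : RightDistrib f g)
    (h' : RightDistrib f g') : RightDistrib f (g * g') := fun a b c => by
  show g' (g (f a b) c) c = f (g' (g a c) c) (g' (g b c) c)
  rw [h, h']

theorem units_inv_apply_apply (u : (BinOp X)ˣ) (a b : X) :
    (↑u⁻¹ : BinOp X) ((u : BinOp X) a b) b = a :=
  congrFun (congrFun u.val_inv a) b

theorem units_apply_inv_apply (u : (BinOp X)ˣ) (a b : X) :
    (u : BinOp X) ((↑u⁻¹ : BinOp X) a b) b = a :=
  congrFun (congrFun u.inv_val a) b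

theorem RightDistrib.units_inv_left {u : (BinOp X)ˣ} {g : BinOp X}
    (h : RightDistrib u g) : RightDistrib ↑u⁻¹ g := fun a b c =>
  calc g ((↑u⁻¹ : BinOp X) a b) c
      = (↑u⁻¹ : BinOp X) ((u : BinOp X) (g ((↑u⁻¹ : BinOp X) a b) c) (g b c)) (g b c) :=
        (units_inv_apply_apply u _ _).symm
    _ = (↑u⁻¹ : BinOp X) (g ((u : BinOp X) ((↑u⁻¹ : BinOp X) a b) b) c) (g b c) := by rw [h]
    _ = (↑u⁻¹ : BinOp X) (g a c) (g b c) := by rw [units_apply_inv_apply]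

theorem RightDistrib.units_inv_right {f : BinOp X} {u : (BinOp X)ˣ}
    (h : RightDistrib f u) : RightDistrib f ↑u⁻¹ := fun a b c => by
  have hu : (u : BinOp X) (f ((↑u⁻¹ : BinOp X) a c) ((↑u⁻¹ : BinOp X) b c)) c = f a b := by
    rw [h, units_apply_inv_apply, units_apply_inv_apply]
  rw [← hu, units_inv_apply_apply]

def unitsDistributedBy (g : BinOp X) : Subgroup (BinOp X)ˣ where
  carrier := {u : (BinOp X)ˣ | RightDistrib (u : BinOp X) g}
  one_mem' := rightDistrib_one_left g
  mul_mem' hu hv := hu.mul_left hv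
  inv_mem' hu := hu.units_inv_left

def unitsDistributingOver (f : BinOp X) : Subgroup (BinOp X)ˣ where
  carrier := {u : (BinOp X)ˣ | RightDistrib f (u : BinOp X)}
  one_mem' := rightDistrib_one_right f
  mul_mem' hu hv := hu.mul_right hv
  inv_mem' hu := hu.units_inv_right

end BinOp

open BinOp in
theorem distribSet_subgroup_closure_general {X : Type u} (S : Set (BinOp X)) (hS : DistribSet S) :
    DistribSet ((fun u : (BinOp X)ˣ => (u : BinOp X)) ''
      ((Subgroup.closure {u : (BinOp X)ˣ | (u : BinOp X) ∈ S} :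
        Subgroup (BinOp X)ˣ) : Set (BinOp X)ˣ)) := by
  rintro _ ⟨u, hu, rfl⟩ _ ⟨v, hv, rfl⟩
  have closure_le_distributedBy : ∀ w : (BinOp X)ˣ, (w : BinOp X) ∈ S →
      Subgroup.closure {u : (BinOp X)ˣ | (u : BinOp X) ∈ S} ≤ unitsDistributedBy (w : BinOp X) :=
    fun _ hw => (Subgroup.closure_le _).2 fun _ hx => hS _ hx _ hw
  have closure_le_distributingOver :
      Subgroup.closure {u : (BinOp X)ˣ | (u : BinOp X) ∈ S} ≤ unitsDistributingOver (u : BinOp X) :=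
    (Subgroup.closure_le _).2 fun w hw => closure_le_distributedBy w hw hu
  exact closure_le_distributingOver hv

open BinOp in
/-- If `S` is a distributive set of invertible operations, then the subgroup of the
group of units of `Bin(X)` generated by `S` is itself a distributive set. -/
theorem distribSet_subgroup_closure {X : Type u} (S : Set (BinOp X)) (hS : DistribSet S)
    (hinv : ∀ f ∈ S, IsUnit f) :
    DistribSet ((fun u : (BinOp X)ˣ => (u : BinOp X)) ''
      ((Subgroup.closure {u : (BinOp X)ˣ | (u : BinOp X) ∈ S} :
        Subgroup (BinOp X)ˣ) : Set (BinOp X)ˣ)) :=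
  distribSet_subgroup_closure_general S hS
end

section
/- Let X be a set and let M ⊆ Bin(X) be a distributive monoid all of whose elements are idempotent operations (a * a = a for all a ∈ X and all * ∈ M). Then M is commutative: *α*β = *β*α in Bin(X) for all *α, *β ∈ M. -/
universe u

namespace BinOp

variable {X : Type u}

theorem mul_apply (f g : BinOp X) (a b : X) : (f * g) a b = g (f a b) b := rfl

theorem RightDistrib.mul_comm_of_idempotent {f g : BinOp X} (hfg : RightDistrib f g)
    (hg : ∀ a, g a a = a) : f * g = g * f := by
  funext a b
  rw [mul_apply, mul_apply, hfg a b b, hg b]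

end BinOp

open BinOp in
/-- A distributive monoid all of whose elements are idempotent operations is
commutative. -/
theorem distribMonoid_idempotent_comm {X : Type u} (M : Submonoid (BinOp X))
    (hM : DistribSet (M : Set (BinOp X)))
    (hidem : ∀ f ∈ M, ∀ a : X, f a a = a) :
    ∀ f ∈ M, ∀ g ∈ M, f * g = g * f :=
  fun f hf g hg => (hM f hf g hg).mul_comm_of_idempotent (hidem g hg)
end

section
/- Let G be a group and, for each g ∈ G, define the binary operation *_g on G by a *_g b = a b⁻¹ g b. Then for every g ∈ G, the operation *_g is invertible in the monoid Bin(G), with inverse *_{g⁻¹}; that is, *_g *_{g⁻¹} and *_{g⁻¹} *_g both equal the right-trivial operation a *₀ b = a. -/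
universe u

/-- The regular embedding operation: `a *_g b = a b⁻¹ g b`. -/
def regularOp {G : Type u} [Group G] (g : G) : BinOp G := fun a b => a * b⁻¹ * g * b

section regularOp

variable {G : Type u} [Group G]

theorem regularOp_mul (g h : G) : regularOp g * regularOp h = regularOp (g * h) := by
  funext a b
  show a * b⁻¹ * g * b * b⁻¹ * h * b = a * b⁻¹ * (g * h) * b
  group

theorem regularOp_one : regularOp (1 : G) = 1 := by
  funext a b
  show a * b⁻¹ * 1 * b = a
  group

variable (G) in
def regularOpHom : G →* BinOp G where
  toFun := regularOp
  map_one' := regularOp_one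
  map_mul' g h := (regularOp_mul g h).symm

end regularOp

/-- Each `*_g` is invertible in the monoid `Bin(G)`, with inverse `*_{g⁻¹}`:
both compositions `*_g *_{g⁻¹}` and `*_{g⁻¹} *_g` are the right-trivial operation. -/
theorem regularOp_isUnit (G : Type u) [Group G] (g : G) :
    IsUnit (regularOp g) ∧
    regularOp g * regularOp g⁻¹ = (1 : BinOp G) ∧
    regularOp g⁻¹ * regularOp g = (1 : BinOp G) := by
  refine ⟨(Group.isUnit g).map (regularOpHom G), ?_, ?_⟩
  · rw [regularOp_mul, mul_inv_cancel, regularOp_one]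
  · rw [regularOp_mul, inv_mul_cancel, regularOp_one]
end
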